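/- arXiv:1803.06228 — 2 statements merged into one kernel-verified Lean document; each statement's English description precedes it below -/
import Mathlib

section
/- If Λ : ℂ → ℂ is differentiable and satisfies Ω̄(x) Λ'(x) = Ω0(x) − Ω1(x) Λ(x) + Ω2(x) Λ(x)^2 for all x in an open set U, and Λ has the product representation Λ(x) = Λ0 · ∏_{j=1}^{L} sinh(u_j − x)/sinh(u_j) on U, then Λ satisfies the quadratic algebraic equation Ω2(x) Λ(x)^2 + [Ω̄(x) F(x) − Ω1(x)] Λ(x) + Ω0(x) = 0 on U, where F(x) = ∑_{j=1}^{L} coth(u_j − x). -/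
/-!
Away from the zeros of the factors, the logarithmic derivative of the product
`∏ⱼ sinh (uⱼ - x)` is `-∑ⱼ coth (uⱼ - x)`, so the product representation gives
`Λ' = -F Λ`. Substituting this into the Riccati equation turns it into the quadratic one.
-/

open Complex

theorem HasDerivAt.fun_finsetProd_of_ne_zero {ι 𝕜 : Type*} [NontriviallyNormedField 𝕜]
    {s : Finset ι} {f : ι → 𝕜 → 𝕜} {f' : ι → 𝕜} {x : 𝕜}
    (hf : ∀ i ∈ s, HasDerivAt (f i) (f' i) x) (hx : ∀ i ∈ s, f i x ≠ 0) :
    HasDerivAt (fun y => ∏ i ∈ s, f i y) ((∑ i ∈ s, f' i / f i x) * ∏ i ∈ s, f i x) x := by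
  classical
  refine (HasDerivAt.fun_finsetProd hf).congr_deriv ?_
  rw [Finset.sum_mul]
  refine Finset.sum_congr rfl fun i hi => ?_
  rw [← Finset.mul_prod_erase s (fun j => f j x) hi, smul_eq_mul, ← mul_assoc,
    div_mul_cancel₀ _ (hx i hi), mul_comm]

theorem Complex.hasDerivAt_sinh_const_sub (a x : ℂ) :
    HasDerivAt (fun y => sinh (a - y)) (-cosh (a - x)) x := by
  simpa using ((hasDerivAt_id x).const_sub a).csinh

theorem Complex.hasDerivAt_prod_sinh_sub {ι : Type*} {s : Finset ι} {u : ι → ℂ} {x : ℂ}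
    (hx : ∀ j ∈ s, sinh (u j - x) ≠ 0) :
    HasDerivAt (fun y => ∏ j ∈ s, sinh (u j - y))
      (-(∑ j ∈ s, cosh (u j - x) / sinh (u j - x)) * ∏ j ∈ s, sinh (u j - x)) x := by
  simpa only [neg_div, Finset.sum_neg_distrib] using
    HasDerivAt.fun_finsetProd_of_ne_zero (fun j _ => hasDerivAt_sinh_const_sub (u j) x) hx

theorem stmt2_general (Ωb Ω0 Ω1 Ω2 : ℂ → ℂ) (L : ℕ) (u : Fin L → ℂ)
    (Λ0 : ℂ) (Λ : ℂ → ℂ)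
    (U : Set ℂ) (hU : IsOpen U)
    (havoid : ∀ x ∈ U, ∀ j, Complex.sinh (u j - x) ≠ 0)
    (hRic : ∀ x ∈ U, Ωb x * deriv Λ x = Ω0 x - Ω1 x * Λ x + Ω2 x * Λ x ^ 2)
    (hrep : ∀ x ∈ U, Λ x = Λ0 * ∏ j, Complex.sinh (u j - x) / Complex.sinh (u j)) :
    ∀ x ∈ U,
      Ω2 x * Λ x ^ 2 +
        (Ωb x * (∑ j, Complex.cosh (u j - x) / Complex.sinh (u j - x)) - Ω1 x) * Λ x +
        Ω0 x = 0 := by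
  intro x hx
  set c := Λ0 / ∏ j, sinh (u j)
  have hprod : ∀ y ∈ U, Λ y = c * ∏ j, sinh (u j - y) := fun y hy => by
    rw [hrep y hy, Finset.prod_div_distrib, mul_div_assoc', div_mul_eq_mul_div]
  have hΛ : Λ =ᶠ[nhds x] fun y => c * ∏ j, sinh (u j - y) :=
    Filter.eventually_of_mem (hU.mem_nhds hx) hprod
  have hderiv : deriv Λ x = -(∑ j, cosh (u j - x) / sinh (u j - x)) * Λ x := by
    rw [hΛ.deriv_eq, ((hasDerivAt_prod_sinh_sub fun j _ => havoid x hx j).const_mul c).deriv,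
      hprod x hx]
    ring
  linear_combination Ωb x * hderiv - hRic x hx

theorem stmt2 (Ωb Ω0 Ω1 Ω2 : ℂ → ℂ) (L : ℕ) (hL : 1 ≤ L) (u : Fin L → ℂ)
    (hu : ∀ j, Complex.sinh (u j) ≠ 0) (Λ0 : ℂ) (Λ : ℂ → ℂ)
    (U : Set ℂ) (hU : IsOpen U)
    (havoid : ∀ x ∈ U, ∀ j, Complex.sinh (u j - x) ≠ 0)
    (hdiff : ∀ x ∈ U, DifferentiableAt ℂ Λ x)
    (hRic : ∀ x ∈ U, Ωb x * deriv Λ x = Ω0 x - Ω1 x * Λ x + Ω2 x * Λ x ^ 2)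
    (hrep : ∀ x ∈ U, Λ x = Λ0 * ∏ j, Complex.sinh (u j - x) / Complex.sinh (u j)) :
    ∀ x ∈ U,
      Ω2 x * Λ x ^ 2 +
        (Ωb x * (∑ j, Complex.cosh (u j - x) / Complex.sinh (u j - x)) - Ω1 x) * Λ x +
        Ω0 x = 0 :=
  stmt2_general Ωb Ω0 Ω1 Ω2 L u Λ0 Λ U hU havoid hRic hrep
end

section
/- With the minimal ansatz ξ(x,Λ) = f0(x) and φ(x,Λ) = g0(x) + g1(x)Λ, imposing v1(Σ) = 0 on the surface Σ = 0 (where Σ = Ω̄Λ^{(1)} − Ω0 + Ω1Λ − Ω2Λ²) is equivalent, by matching coefficients of powers Λ^0, Λ^1, Λ^2, to the three determining equations: (i) [f0' + g1]Ω2Ω̄ + f0[Ω2'Ω̄ − Ω2Ω̄'] = 0; (ii) [f0'Ω1 + g1'Ω̄]Ω̄ + f0[Ω1'Ω̄ − Ω1Ω̄'] − 2g0Ω2Ω̄ = 0; (iii) [f0' − g1]Ω0Ω̄ − [g0Ω1 + g0'Ω̄]Ω̄ + f0[Ω0'Ω̄ − Ω0Ω̄'] = 0, assuming Ω̄(x)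 ≠ 0. -/
theorem stmt14 (Ωb Ω0 Ω1 Ω2 f0 g0 g1 : ℂ → ℂ)
    (hΩb : Differentiable ℂ Ωb) (hΩ0 : Differentiable ℂ Ω0)
    (hΩ1 : Differentiable ℂ Ω1) (hΩ2 : Differentiable ℂ Ω2)
    (hf0 : Differentiable ℂ f0) (hg0 : Differentiable ℂ g0)
    (hg1 : Differentiable ℂ g1)
    (x : ℂ) (hne : Ωb x ≠ 0) :
    (∀ Λ : ℂ,
      f0 x * (deriv Ωb x * ((Ω0 x - Ω1 x * Λ + Ω2 x * Λ ^ 2) / Ωb x)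
          - deriv Ω0 x + deriv Ω1 x * Λ - deriv Ω2 x * Λ ^ 2)
        + (g0 x + g1 x * Λ) * (Ω1 x - 2 * Ω2 x * Λ)
        + (deriv g0 x + deriv g1 x * Λ
            + (g1 x - deriv f0 x) * ((Ω0 x - Ω1 x * Λ + Ω2 x * Λ ^ 2) / Ωb x)) * Ωb x
        = 0)
    ↔ ((deriv f0 x + g1 x) * Ω2 x * Ωb x
          + f0 x * (deriv Ω2 x * Ωb x - Ω2 x * deriv Ωb x) = 0
        ∧ (deriv f0 x * Ω1 x + deriv g1 x * Ωb x) * Ωb x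
          + f0 x * (deriv Ω1 x * Ωb x - Ω1 x * deriv Ωb x)
          - 2 * g0 x * Ω2 x * Ωb x = 0
        ∧ (deriv f0 x - g1 x) * Ω0 x * Ωb x
          - (g0 x * Ω1 x + deriv g0 x * Ωb x) * Ωb x
          + f0 x * (deriv Ω0 x * Ωb x - Ω0 x * deriv Ωb x) = 0) := by
  constructor
  · intro h
    have h0 := h 0
    have h1 := h 1
    have hm := h (-1)
    field_simp at h0 h1 hm
    refine ⟨?_, ?_, ?_⟩
    · linear_combination h0 - (1/2 : ℂ) * h1 - (1/2 : ℂ) * hm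
    · linear_combination (1/2 : ℂ) * h1 - (1/2 : ℂ) * hm
    · linear_combination (-1 : ℂ) * h0
  · rintro ⟨e1, e2, e3⟩ Λ
    field_simp
    linear_combination (-(Λ^2)) * e1 + Λ * e2 - e3
end
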